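/- arXiv:1905.00707 — 5 statements merged into one kernel-verified Lean document; each statement's English description precedes it below -/
import Mathlib

section
/- Let F ≥ 0 be a real number, and let sgn : ℝ → Set ℝ be the set-valued signum, sgn(x) = {x/|x|} if x ≠ 0 and sgn(0) = [−1,1]. Then for all x, y ∈ ℝ: x ∈ F·sgn(y − x) if and only if x = proj_{[−F,F]}(y). -/
/-- Set-valued signum: `{1}` if positive, `{-1}` if negative, `[-1,1]` at zero. -/
noncomputable def sgnSet (w : ℝ) : Set ℝ :=
  if 0 < w then {1} else if w < 0 then {-1} else Set.Icc (-1) 1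

/-- Projection onto the closed interval `[c,d]` (for `c ≤ d`): `max c (min d x)`. -/
noncomputable def proj (c d x : ℝ) : ℝ := max c (min d x)

open Set

section sgnSet

variable {F w : ℝ}

lemma image_mul_sgnSet_of_pos (hw : 0 < w) : (F * ·) '' sgnSet w = {F} := by
  simp [sgnSet, hw]

lemma image_mul_sgnSet_of_neg (hw : w < 0) : (F * ·) '' sgnSet w = {-F} := by
  simp [sgnSet, hw, hw.not_gt]

lemma image_mul_sgnSet_zero (hF : 0 ≤ F) : (F * ·) '' sgnSet 0 = Icc (-F) F := by
  simpa [sgnSet] using image_mul_left_Icc hF (by norm_num : (-1 : ℝ) ≤ 1)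

end sgnSet

section proj

variable {c d x y : ℝ}

lemma eq_proj_iff_of_lt (hcd : c ≤ d) (hxy : x < y) : x = proj c d y ↔ x = d := by
  rw [proj, max_def, min_def]
  constructor <;> intro h <;> split_ifs at * <;> linarith

lemma eq_proj_iff_of_gt (hcd : c ≤ d) (hyx : y < x) : x = proj c d y ↔ x = c := by
  rw [proj, max_def, min_def]
  constructor <;> intro h <;> split_ifs at * <;> linarith

lemma eq_proj_self_iff (hcd : c ≤ d) : x = proj c d x ↔ x ∈ Icc c d := by
  constructor
  · intro h
    exact ⟨h ▸ le_max_left _ _, by rw [proj, max_def, min_def] at h; split_ifs at h <;> linarith⟩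
  · rintro ⟨hcx, hxd⟩
    rw [proj, min_eq_right hxd, max_eq_right hcx]

end proj

theorem stmt_1 (F : ℝ) (hF : 0 ≤ F) (x y : ℝ) :
    x ∈ (fun s => F * s) '' sgnSet (y - x) ↔ x = proj (-F) F y := by
  have hFF : -F ≤ F := by linarith
  rcases lt_trichotomy x y with hxy | rfl | hyx
  · rw [image_mul_sgnSet_of_pos (sub_pos.2 hxy), mem_singleton_iff,
      eq_proj_iff_of_lt hFF hxy]
  · rw [sub_self, image_mul_sgnSet_zero hF, eq_proj_self_iff hFF]
  · rw [image_mul_sgnSet_of_neg (sub_neg.2 hyx), mem_singleton_iff,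
      eq_proj_iff_of_gt hFF hyx]
end

section
/- Let A > B > 0 and define the interval 𝒞 := [A−B, A+B]. Then for all x, y ∈ ℝ, the following are equivalent: (i) y ∈ [−A, A] + B·sgn(x − y) (Minkowski sum, with sgn the set-valued signum); (ii) y ∈ [proj_{−𝒞}(x), proj_{𝒞}(x)], where −𝒞 = [−A−B, −A+B]. -/
open Pointwise

theorem stmt_2 (A B : ℝ) (hAB : B < A) (hB : 0 < B) (x y : ℝ) :
    y ∈ Set.Icc (-A) A + (fun s => B * s) '' sgnSet (x - y) ↔
      y ∈ Set.Icc (proj (-A - B) (-A + B) x) (proj (A - B) (A + B) x) := by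
  simp only [Set.mem_add, Set.mem_image, Set.mem_Icc, proj, sgnSet]
  rcases lt_trichotomy (x - y) 0 with h | h | h
  · rw [if_neg (by linarith), if_pos h]
    simp only [Set.mem_singleton_iff]
    constructor
    · rintro ⟨a, ⟨h1, h2⟩, b, ⟨s, rfl, rfl⟩, hay⟩
      constructor
      · exact max_le (by linarith) ((min_le_right _ _).trans (by linarith))
      · exact le_max_of_le_left (by linarith)
    · rintro ⟨h1, h2⟩
      have hl : -A - B ≤ y := le_trans (le_max_left _ _) h1
      have hu : y ≤ A - B := by
        rcases le_max_iff.mp h2 with h3 | h3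
        · exact h3
        · linarith [le_trans h3 (min_le_right (A + B) x)]
      exact ⟨y + B, ⟨by linarith, by linarith⟩, B * (-1), ⟨-1, rfl, rfl⟩, by ring⟩
  · rw [if_neg (by linarith), if_neg (by linarith)]
    have hxy : x = y := by linarith
    subst hxy
    constructor
    · rintro ⟨a, ⟨h1, h2⟩, b, ⟨s, ⟨hs1, hs2⟩, rfl⟩, hay⟩
      have h3 : -A - B ≤ x := by nlinarith
      have h4 : x ≤ A + B := by nlinarith
      exact ⟨max_le h3 (min_le_right _ _),
        le_max_of_le_right (le_min h4 le_rfl)⟩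
    · rintro ⟨h1, h2⟩
      have hl : -A - B ≤ x := le_trans (le_max_left _ _) h1
      have hu : x ≤ A + B := by
        rcases le_max_iff.mp h2 with h3 | h3
        · linarith
        · linarith [le_trans h3 (min_le_left (A + B) x)]
      rcases le_total x A with h5 | h5
      · have h6 : max (-A) x ∈ Set.Icc (-A) A := ⟨le_max_left _ _, max_le (by linarith) h5⟩
        refine ⟨max (-A) x, h6, B * ((x - max (-A) x)/B), ⟨(x - max (-A) x)/B, ⟨?_, ?_⟩, rfl⟩, ?_⟩
        · rw [le_div_iff₀ hB]
          rcases le_total (-A) x with h7 | h7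
          · simp [max_eq_right h7]; linarith
          · simp [max_eq_left h7]; linarith
        · rw [div_le_one hB]
          have := le_max_right (-A) x
          linarith
        · field_simp; ring
      · refine ⟨A, ⟨by linarith, le_rfl⟩, B * ((x - A)/B), ⟨(x - A)/B, ⟨?_, ?_⟩, rfl⟩, ?_⟩
        · rw [le_div_iff₀ hB]; linarith
        · rw [div_le_one hB]; linarith
        · field_simp; ring
  · rw [if_pos h]
    simp only [Set.mem_singleton_iff]
    constructor
    · rintro ⟨a, ⟨h1, h2⟩, b, ⟨s, rfl, rfl⟩, hay⟩
      constructor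
      · exact max_le (by linarith) ((min_le_left _ _).trans (by linarith))
      · exact le_max_of_le_right (le_min (by linarith) (by linarith))
    · rintro ⟨h1, h2⟩
      have hu : y ≤ A + B := by
        rcases le_max_iff.mp h2 with h3 | h3
        · linarith
        · linarith [le_trans h3 (min_le_left (A + B) x)]
      have hl : -A + B ≤ y := by
        rcases max_le_iff.mp h1 with ⟨h3, h4⟩
        rcases le_min_iff.mp (le_refl ((-A + B) ⊓ x)) with ⟨_, _⟩
        rcases le_total (-A + B) x with h5 | h5
        · calc -A + B = min (-A + B) x := (min_eq_left h5).symm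
            _ ≤ y := h4
        · have h6 : x ≤ y := (min_eq_right h5) ▸ h4
          linarith
      exact ⟨y - B, ⟨by linarith, by linarith⟩, B * 1, ⟨1, rfl, rfl⟩, by ring⟩
end

section
/- Let A > B > 0 and define 𝒞 := [A−B, A+B]. Then for all x, y, z ∈ ℝ, the following are equivalent: (i) z ∈ A·sgn(x − z) + B·sgn(y − z) (Minkowski sum of set-valued signums); (ii) z = proj_{[proj_{−𝒞}(y), proj_{𝒞}(y)]}(x). -/
open Pointwise

set_option maxHeartbeats 1000000

lemma sgnSet_facts (w s : ℝ) (hs : s ∈ sgnSet w) :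
    (-1 ≤ s ∧ s ≤ 1) ∧ (0 < w → s = 1) ∧ (w < 0 → s = -1) := by
  unfold sgnSet at hs
  split_ifs at hs with h1 h2
  · simp only [Set.mem_singleton_iff] at hs
    subst hs
    exact ⟨⟨by norm_num, le_refl 1⟩, fun _ => rfl, fun h => absurd h (by linarith)⟩
  · simp only [Set.mem_singleton_iff] at hs
    subst hs
    exact ⟨⟨le_refl (-1), by norm_num⟩, fun h => absurd h (by linarith), fun _ => rfl⟩
  · exact ⟨hs, fun h => absurd h h1, fun h => absurd h h2⟩

lemma proj_cases (c d x z : ℝ) (hcd : c ≤ d) :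
    z = proj c d x ↔ c ≤ z ∧ z ≤ d ∧ (z = x ∨ (z = d ∧ d ≤ x) ∨ (z = c ∧ x ≤ c)) := by
  unfold proj
  simp only [max_def, min_def]
  split_ifs <;> constructor <;>
    first
      | (rintro ⟨hc, hd, (rfl | ⟨rfl, h⟩ | ⟨rfl, h⟩)⟩ <;> linarith)
      | (rintro rfl
         refine ⟨by linarith, by linarith, ?_⟩
         first
           | exact Or.inl rfl
           | exact Or.inr (Or.inl ⟨rfl, by linarith⟩)
           | exact Or.inr (Or.inr ⟨rfl, by linarith⟩))

theorem stmt_3 (A B : ℝ) (hAB : B < A) (hB : 0 < B) (x y z : ℝ) :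
    z ∈ (fun s => A * s) '' sgnSet (x - z) + (fun s => B * s) '' sgnSet (y - z) ↔
      z = proj (proj (-A - B) (-A + B) y) (proj (A - B) (A + B) y) x := by
  have hA : (0:ℝ) < A := hB.trans hAB
  have hc1 : (-A - B : ℝ) ≤ -A + B := by linarith
  have hc2 : (A - B : ℝ) ≤ A + B := by linarith
  set P := proj (-A - B) (-A + B) y with hPdef
  set Q := proj (A - B) (A + B) y with hQdef
  obtain ⟨hP1, hP2, hPalt⟩ := (proj_cases (-A - B) (-A + B) y P hc1).mp hPdef
  obtain ⟨hQ1, hQ2, hQalt⟩ := (proj_cases (A - B) (A + B) y Q hc2).mp hQdef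
  have hPQ : P ≤ Q := by linarith
  rw [proj_cases P Q x z hPQ]
  constructor
  · rintro ⟨a, ⟨s, hs, rfl⟩, b, ⟨t, ht, rfl⟩, hz⟩
    simp only at hz
    obtain ⟨⟨hs1, hs2⟩, hsp, hsn⟩ := sgnSet_facts _ _ hs
    obtain ⟨⟨ht1, ht2⟩, htp, htn⟩ := sgnSet_facts _ _ ht
    have hAs1 : A * s ≤ A := by nlinarith
    have hAs2 : -A ≤ A * s := by nlinarith
    have hBt1 : B * t ≤ B := by nlinarith
    have hBt2 : -B ≤ B * t := by nlinarith
    rcases lt_trichotomy (x - z) 0 with hx | hx | hx <;>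
      rcases lt_trichotomy (y - z) 0 with hy | hy | hy <;>
      (first
        | rw [hsp (by linarith : (0:ℝ) < x - z)] at hz
        | rw [hsn (by linarith : x - z < (0:ℝ))] at hz
        | skip) <;>
      (first
        | rw [htp (by linarith : (0:ℝ) < y - z)] at hz
        | rw [htn (by linarith : y - z < (0:ℝ))] at hz
        | skip) <;>
      rcases hPalt with hp | ⟨hp, hp2⟩ | ⟨hp, hp2⟩ <;>
      rcases hQalt with hq | ⟨hq, hq2⟩ | ⟨hq, hq2⟩ <;>
      refine ⟨by linarith, by linarith, ?_⟩ <;>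
      first
        | (left; linarith)
        | (right; left; exact ⟨by linarith, by linarith⟩)
        | (right; right; exact ⟨by linarith, by linarith⟩)
  · rintro ⟨hPz, hzQ, halt⟩
    rcases lt_trichotomy (x - z) 0 with hx | hx | hx <;>
      rcases lt_trichotomy (y - z) 0 with hy | hy | hy
    · -- x<z, y<z : z = -A-B, s = -1, t = -1
      have hzv : z = -A - B := by
        rcases halt with h | ⟨h, h2⟩ | ⟨h, h2⟩ <;>
          rcases hPalt with hp | ⟨hp, hp2⟩ | ⟨hp, hp2⟩ <;> linarith
      refine ⟨A * (-1), ⟨-1, ?_, rfl⟩, B * (-1), ⟨-1, ?_, rfl⟩, ?_⟩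
      · rw [sgnSet, if_neg (by linarith), if_pos hx]; rfl
      · rw [sgnSet, if_neg (by linarith), if_pos hy]; rfl
      · show A * (-1) + B * (-1) = z; linarith
    · -- x<z, y=z : s = -1, t = (z+A)/B
      have hzb : -A - B ≤ z ∧ z ≤ -A + B := by
        rcases halt with h | ⟨h, h2⟩ | ⟨h, h2⟩ <;> constructor <;> linarith
      refine ⟨A * (-1), ⟨-1, ?_, rfl⟩, B * ((z + A)/B), ⟨(z + A)/B, ?_, rfl⟩, ?_⟩
      · rw [sgnSet, if_neg (by linarith), if_pos hx]; rfl
      · rw [sgnSet, hy, if_neg (by norm_num), if_neg (by norm_num), Set.mem_Icc]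
        constructor
        · rw [le_div_iff₀ hB]; linarith [hzb.1]
        · rw [div_le_iff₀ hB]; linarith [hzb.2]
      · show A * (-1) + B * ((z + A)/B) = z; field_simp; ring
    · -- x<z, y>z : z = -A+B, s = -1, t = 1
      have hzv : z = -A + B := by
        rcases halt with h | ⟨h, h2⟩ | ⟨h, h2⟩ <;>
          rcases hPalt with hp | ⟨hp, hp2⟩ | ⟨hp, hp2⟩ <;> linarith
      refine ⟨A * (-1), ⟨-1, ?_, rfl⟩, B * 1, ⟨1, ?_, rfl⟩, ?_⟩
      · rw [sgnSet, if_neg (by linarith), if_pos hx]; rfl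
      · rw [sgnSet, if_pos hy]; rfl
      · show A * (-1) + B * 1 = z; linarith
    · -- x=z, y<z : s = (z+B)/A, t = -1
      have hzb : -A - B ≤ z ∧ z ≤ A - B := by
        rcases hQalt with hq | ⟨hq, hq2⟩ | ⟨hq, hq2⟩ <;> constructor <;> linarith
      refine ⟨A * ((z + B)/A), ⟨(z + B)/A, ?_, rfl⟩, B * (-1), ⟨-1, ?_, rfl⟩, ?_⟩
      · rw [sgnSet, hx, if_neg (by norm_num), if_neg (by norm_num), Set.mem_Icc]
        constructor
        · rw [le_div_iff₀ hA]; linarith [hzb.1]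
        · rw [div_le_iff₀ hA]; linarith [hzb.2]
      · rw [sgnSet, if_neg (by linarith), if_pos hy]; rfl
      · show A * ((z + B)/A) + B * (-1) = z; field_simp; ring
    · -- x=z, y=z : s = t = z/(A+B)
      have hApB : (0:ℝ) < A + B := by linarith
      refine ⟨A * (z/(A + B)), ⟨z/(A + B), ?_, rfl⟩, B * (z/(A + B)), ⟨z/(A + B), ?_, rfl⟩, ?_⟩
      · rw [sgnSet, hx, if_neg (by norm_num), if_neg (by norm_num), Set.mem_Icc]
        constructor
        · rw [le_div_iff₀ hApB]; linarith
        · rw [div_le_iff₀ hApB]; linarith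
      · rw [sgnSet, hy, if_neg (by norm_num), if_neg (by norm_num), Set.mem_Icc]
        constructor
        · rw [le_div_iff₀ hApB]; linarith
        · rw [div_le_iff₀ hApB]; linarith
      · show A * (z/(A + B)) + B * (z/(A + B)) = z; field_simp
    · -- x=z, y>z : s = (z-B)/A, t = 1
      have hzb : B - A ≤ z ∧ z ≤ A + B := by
        rcases hPalt with hp | ⟨hp, hp2⟩ | ⟨hp, hp2⟩ <;> constructor <;> linarith
      refine ⟨A * ((z - B)/A), ⟨(z - B)/A, ?_, rfl⟩, B * 1, ⟨1, ?_, rfl⟩, ?_⟩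
      · rw [sgnSet, hx, if_neg (by norm_num), if_neg (by norm_num), Set.mem_Icc]
        constructor
        · rw [le_div_iff₀ hA]; linarith [hzb.1]
        · rw [div_le_iff₀ hA]; linarith [hzb.2]
      · rw [sgnSet, if_pos hy]; rfl
      · show A * ((z - B)/A) + B * 1 = z; field_simp; ring
    · -- x>z, y<z : z = A-B, s = 1, t = -1
      have hzv : z = A - B := by
        rcases halt with h | ⟨h, h2⟩ | ⟨h, h2⟩ <;>
          rcases hQalt with hq | ⟨hq, hq2⟩ | ⟨hq, hq2⟩ <;> linarith
      refine ⟨A * 1, ⟨1, ?_, rfl⟩, B * (-1), ⟨-1, ?_, rfl⟩, ?_⟩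
      · rw [sgnSet, if_pos hx]; rfl
      · rw [sgnSet, if_neg (by linarith), if_pos hy]; rfl
      · show A * 1 + B * (-1) = z; linarith
    · -- x>z, y=z : s = 1, t = (z-A)/B
      have hzb : A - B ≤ z ∧ z ≤ A + B := by
        rcases halt with h | ⟨h, h2⟩ | ⟨h, h2⟩ <;> constructor <;> linarith
      refine ⟨A * 1, ⟨1, ?_, rfl⟩, B * ((z - A)/B), ⟨(z - A)/B, ?_, rfl⟩, ?_⟩
      · rw [sgnSet, if_pos hx]; rfl
      · rw [sgnSet, hy, if_neg (by norm_num), if_neg (by norm_num), Set.mem_Icc]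
        constructor
        · rw [le_div_iff₀ hB]; linarith [hzb.1]
        · rw [div_le_iff₀ hB]; linarith [hzb.2]
      · show A * 1 + B * ((z - A)/B) = z; field_simp; ring
    · -- x>z, y>z : z = A+B, s = 1, t = 1
      have hzv : z = A + B := by
        rcases halt with h | ⟨h, h2⟩ | ⟨h, h2⟩ <;>
          rcases hQalt with hq | ⟨hq, hq2⟩ | ⟨hq, hq2⟩ <;> linarith
      refine ⟨A * 1, ⟨1, ?_, rfl⟩, B * 1, ⟨1, ?_, rfl⟩, ?_⟩
      · rw [sgnSet, if_pos hx]; rfl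
      · rw [sgnSet, if_pos hy]; rfl
      · show A * 1 + B * 1 = z; linarith
end

section
/- Let A > B > 0, 𝒞 := [A−B, A+B], and x, y ∈ ℝ. If z := proj_{[proj_{−𝒞}(y), proj_{𝒞}(y)]}(x), then there exist s₁ ∈ sgn(x − z) and s₂ ∈ sgn(y − z) with z = A·s₁ + B·s₂; moreover such a z is the unique real number with this property. -/
lemma mem_sgnSet_pos {w : ℝ} (h : 0 < w) : (1:ℝ) ∈ sgnSet w := by
  simp [sgnSet, h]

lemma mem_sgnSet_neg {w : ℝ} (h : w < 0) : (-1:ℝ) ∈ sgnSet w := by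
  simp [sgnSet, h, not_lt.mpr h.le]

lemma mem_sgnSet_zero {w a : ℝ} (h : w = 0) (h1 : -1 ≤ a) (h2 : a ≤ 1) : a ∈ sgnSet w := by
  subst h; simp [sgnSet, Set.mem_Icc, h1, h2]

lemma sgnSet_bounds {w a : ℝ} (h : a ∈ sgnSet w) : -1 ≤ a ∧ a ≤ 1 := by
  unfold sgnSet at h
  split_ifs at h <;> simp_all

lemma sgnSet_mono {w₁ w₂ a b : ℝ} (h : w₁ < w₂) (ha : a ∈ sgnSet w₁) (hb : b ∈ sgnSet w₂) :
    a ≤ b := by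
  rcases lt_trichotomy w₂ 0 with h2 | h2 | h2
  · have h1 : w₁ < 0 := h.trans h2
    unfold sgnSet at ha
    rw [if_neg (by linarith), if_pos h1] at ha
    simp at ha; subst ha; exact (sgnSet_bounds hb).1
  · have h1 : w₁ < 0 := by linarith
    unfold sgnSet at ha
    rw [if_neg (by linarith), if_pos h1] at ha
    simp at ha; subst ha; exact (sgnSet_bounds hb).1
  · unfold sgnSet at hb
    rw [if_pos h2] at hb
    simp at hb; subst hb; exact (sgnSet_bounds ha).2

theorem stmt_4 (A B : ℝ) (hAB : B < A) (hB : 0 < B) (x y : ℝ)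
    (z : ℝ) (hz : z = proj (proj (-A - B) (-A + B) y) (proj (A - B) (A + B) y) x) :
    (∃ s₁ ∈ sgnSet (x - z), ∃ s₂ ∈ sgnSet (y - z), z = A * s₁ + B * s₂) ∧
    (∀ z', (∃ s₁ ∈ sgnSet (x - z'), ∃ s₂ ∈ sgnSet (y - z'), z' = A * s₁ + B * s₂) → z' = z) := by
  have hA : 0 < A := hB.trans hAB
  set c := proj (-A - B) (-A + B) y with hc
  set d := proj (A - B) (A + B) y with hd
  have hc1 : -A - B ≤ c := le_max_left _ _
  have hc2 : c ≤ -A + B := max_le (by linarith) (min_le_left _ _)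
  have hd1 : A - B ≤ d := le_max_left _ _
  have hd2 : d ≤ A + B := max_le (by linarith) (min_le_left _ _)
  have hcd : c ≤ d := by linarith
  have hmain : ∃ s₁ ∈ sgnSet (x - z), ∃ s₂ ∈ sgnSet (y - z), z = A * s₁ + B * s₂ := by
    rcases lt_or_ge d x with hdx | hxd
    · -- z = d, s₁ = 1
      have hzd : z = d := by
        rw [hz]; unfold proj
        rw [min_eq_left hdx.le, max_eq_right hcd]
      have hs1 : (1:ℝ) ∈ sgnSet (x - z) := mem_sgnSet_pos (by rw [hzd]; linarith)
      rcases lt_trichotomy y (A - B) with hy | hy | hy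
      · have hdval : d = A - B := by
          rw [hd]; unfold proj
          rw [min_eq_right (by linarith : y ≤ A + B), max_eq_left hy.le]
        refine ⟨1, hs1, -1, mem_sgnSet_neg (by rw [hzd, hdval]; linarith), ?_⟩
        rw [hzd, hdval]; ring
      · have hdval : d = y := by
          rw [hd]; unfold proj
          rw [min_eq_right (by linarith : y ≤ A + B), max_eq_right hy.ge]
        refine ⟨1, hs1, (y - A) / B, mem_sgnSet_zero (by rw [hzd, hdval]; ring)
          (by rw [le_div_iff₀ hB]; linarith) (by rw [div_le_one hB]; linarith), ?_⟩
        rw [hzd, hdval]; field_simp; ring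
      · rcases le_or_gt y (A + B) with hy2 | hy2
        · have hdval : d = y := by
            rw [hd]; unfold proj
            rw [min_eq_right hy2, max_eq_right hy.le]
          refine ⟨1, hs1, (y - A) / B, mem_sgnSet_zero (by rw [hzd, hdval]; ring)
            (by rw [le_div_iff₀ hB]; linarith) (by rw [div_le_one hB]; linarith), ?_⟩
          rw [hzd, hdval]; field_simp; ring
        · have hdval : d = A + B := by
            rw [hd]; unfold proj
            rw [min_eq_left hy2.le, max_eq_right (by linarith)]
          refine ⟨1, hs1, 1, mem_sgnSet_pos (by rw [hzd, hdval]; linarith), ?_⟩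
          rw [hzd, hdval]; ring
    · rcases lt_or_ge x c with hxc | hcx
      · -- z = c, s₁ = -1
        have hzc : z = c := by
          rw [hz]; unfold proj
          rcases le_or_gt d x with h | h
          · rw [min_eq_left h, max_eq_right hcd]; linarith [hxc.trans_le hcd]
          · rw [min_eq_right h.le, max_eq_left hxc.le]
        have hs1 : (-1:ℝ) ∈ sgnSet (x - z) := mem_sgnSet_neg (by rw [hzc]; linarith)
        rcases lt_trichotomy y (-A - B) with hy | hy | hy
        · have hcval : c = -A - B := by
            rw [hc]; unfold proj
            rw [min_eq_right (by linarith : y ≤ -A + B), max_eq_left hy.le]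
          refine ⟨-1, hs1, -1, mem_sgnSet_neg (by rw [hzc, hcval]; linarith), ?_⟩
          rw [hzc, hcval]; ring
        · have hcval : c = y := by
            rw [hc]; unfold proj
            rw [min_eq_right (by linarith : y ≤ -A + B), max_eq_right hy.ge]
          refine ⟨-1, hs1, (y + A) / B, mem_sgnSet_zero (by rw [hzc, hcval]; ring)
            (by rw [le_div_iff₀ hB]; linarith) (by rw [div_le_one hB]; linarith), ?_⟩
          rw [hzc, hcval]; field_simp; ring
        · rcases le_or_gt y (-A + B) with hy2 | hy2
          · have hcval : c = y := by
              rw [hc]; unfold proj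
              rw [min_eq_right hy2, max_eq_right hy.le]
            refine ⟨-1, hs1, (y + A) / B, mem_sgnSet_zero (by rw [hzc, hcval]; ring)
              (by rw [le_div_iff₀ hB]; linarith) (by rw [div_le_one hB]; linarith), ?_⟩
            rw [hzc, hcval]; field_simp; ring
          · have hcval : c = -A + B := by
              rw [hc]; unfold proj
              rw [min_eq_left hy2.le, max_eq_right (by linarith)]
            refine ⟨-1, hs1, 1, mem_sgnSet_pos (by rw [hzc, hcval]; linarith), ?_⟩
            rw [hzc, hcval]; ring
      · -- z = x
        have hzx : z = x := by
          rw [hz]; unfold proj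
          rw [min_eq_right hxd, max_eq_right hcx]
        rcases lt_trichotomy y x with hy | hy | hy
        · -- s₂ = -1, s₁ = (x+B)/A
          have hxub : x ≤ A - B := by
            by_contra h
            push_neg at h
            have hm : x ≤ min (A + B) y := by
              by_contra h2
              push_neg at h2
              have : d < x := by rw [hd]; unfold proj; exact max_lt h h2
              linarith
            have : x ≤ y := hm.trans (min_le_right _ _)
            linarith
          refine ⟨(x + B) / A, mem_sgnSet_zero (by rw [hzx]; ring)
            (by rw [le_div_iff₀ hA]; linarith) (by rw [div_le_one hA]; linarith),
            -1, mem_sgnSet_neg (by rw [hzx]; linarith), ?_⟩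
          rw [hzx]; field_simp; ring
        · -- y = x, z = x = y
          have hbounds : -A - B ≤ x ∧ x ≤ A + B := ⟨by linarith, by linarith⟩
          rcases le_or_gt x (-A) with hxA | hxA
          · refine ⟨-1, mem_sgnSet_zero (by rw [hzx]; ring) (by norm_num) (by norm_num),
              (x + A) / B, mem_sgnSet_zero (by rw [hzx, hy]; ring)
              (by rw [le_div_iff₀ hB]; linarith) (by rw [div_le_one hB]; linarith), ?_⟩
            rw [hzx]; field_simp; ring
          · rcases le_or_gt x A with hxA2 | hxA2
            · refine ⟨x / A, mem_sgnSet_zero (by rw [hzx]; ring)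
                (by rw [le_div_iff₀ hA]; linarith) (by rw [div_le_one hA]; linarith),
                0, mem_sgnSet_zero (by rw [hzx, hy]; ring) (by norm_num) (by norm_num), ?_⟩
              rw [hzx]; field_simp; ring
            · refine ⟨1, mem_sgnSet_zero (by rw [hzx]; ring) (by norm_num) (by norm_num),
                (x - A) / B, mem_sgnSet_zero (by rw [hzx, hy]; ring)
                (by rw [le_div_iff₀ hB]; linarith) (by rw [div_le_one hB]; linarith), ?_⟩
              rw [hzx]; field_simp; ring
        · -- x < y, s₂ = 1, s₁ = (x-B)/A
          have hxlb : -A + B ≤ x := by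
            by_contra h
            push_neg at h
            have hm : min (-A + B) y ≤ x := by
              by_contra h2
              push_neg at h2
              have : x < c := by rw [hc]; unfold proj; exact lt_max_of_lt_right h2
              linarith
            have hy' : y ≤ x := by
              rcases le_total (-A + B) y with hle | hle
              · rw [min_eq_left hle] at hm; linarith
              · rw [min_eq_right hle] at hm; exact hm
            linarith
          refine ⟨(x - B) / A, mem_sgnSet_zero (by rw [hzx]; ring)
            (by rw [le_div_iff₀ hA]; linarith) (by rw [div_le_one hA]; linarith),
            1, mem_sgnSet_pos (by rw [hzx]; linarith), ?_⟩
          rw [hzx]; field_simp; ring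
  refine ⟨hmain, ?_⟩
  rintro z' ⟨s₁', hs1', s₂', hs2', hz'⟩
  obtain ⟨s₁, hs1, s₂, hs2, hzeq⟩ := hmain
  rcases lt_trichotomy z' z with h | h | h
  · exfalso
    have h1 : s₁ ≤ s₁' := sgnSet_mono (by linarith) hs1 hs1'
    have h2 : s₂ ≤ s₂' := sgnSet_mono (by linarith) hs2 hs2'
    nlinarith
  · exact h
  · exfalso
    have h1 : s₁' ≤ s₁ := sgnSet_mono (by linarith) hs1' hs1
    have h2 : s₂' ≤ s₂ := sgnSet_mono (by linarith) hs2' hs2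
    nlinarith
end

section
/- Let F > 0, h > 0, and consider the scalar implicit Euler step for ż ∈ −F·sgn(z): z_{k+1} ∈ z_k − hF·sgn(z_{k+1}). Its unique solution is z_{k+1} = z_k − proj_{[−hF,hF]}(z_k); consequently, if |z_k| ≤ hF then z_{k+1} = 0, and otherwise |z_{k+1}| = |z_k| − hF < |z_k|. In particular z_k reaches exactly 0 after at most ⌈|z₀|/(hF)⌉ steps and stays at 0 thereafter. -/
/-!
Writing `c = hF`, the implicit step asks for `w` with `x ∈ w + c·sgn w`. Since `sgn` is monotone,
`w ↦ w + c·sgn w` is strictly monotone, so there is at most one such `w`, and `x - proj_{[-c,c]} x`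
is one. This step is soft thresholding, `|w| = max (|x| - c) 0`, so after `k` steps
`|z k| = max (|z 0| - k c) 0`, which vanishes as soon as `k c ≥ |z 0|`.
-/

section ImplicitStep

variable {c x s s' w w' : ℝ}

theorem mem_sgnSet_iff : s ∈ sgnSet w ↔ |s| ≤ 1 ∧ s * w = |w| := by
  unfold sgnSet
  split_ifs with hpos hneg
  · rw [Set.mem_singleton_iff, abs_of_pos hpos]
    constructor
    · rintro rfl
      simp
    · rintro ⟨-, hsw⟩
      nlinarith
  · rw [Set.mem_singleton_iff, abs_of_neg hneg]
    constructor
    · rintro rfl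
      simp
    · rintro ⟨-, hsw⟩
      nlinarith
  · obtain rfl : w = 0 := le_antisymm (not_lt.1 hpos) (not_lt.1 hneg)
    simp [Set.mem_Icc, abs_le]

theorem sgnSet_monotone (hs : s ∈ sgnSet w) (hs' : s' ∈ sgnSet w') :
    0 ≤ (s - s') * (w - w') := by
  rw [mem_sgnSet_iff] at hs hs'
  have hsw' : s * w' ≤ |w'| := calc
    s * w' ≤ |s| * |w'| := (le_abs_self _).trans (abs_mul s w').le
    _ ≤ |w'| := mul_le_of_le_one_left (abs_nonneg _) hs.1
  have hs'w : s' * w ≤ |w| := calc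
    s' * w ≤ |s'| * |w| := (le_abs_self _).trans (abs_mul s' w).le
    _ ≤ |w| := mul_le_of_le_one_left (abs_nonneg _) hs'.1
  nlinarith [hs.2, hs'.2]

theorem eq_of_add_mul_eq_of_mem_sgnSet (hc : 0 < c)
    (hs : s ∈ sgnSet w) (hs' : s' ∈ sgnSet w') (hw : w + c * s = w' + c * s') : w = w' := by
  have hdiff : w - w' = c * (s' - s) := by linarith
  have hsq : (w - w') ^ 2 ≤ 0 := calc
    (w - w') ^ 2 = -(c * ((s - s') * (w - w'))) := by rw [sq]; nth_rewrite 1 [hdiff]; ring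
    _ ≤ 0 := neg_nonpos.2 (mul_nonneg hc.le (sgnSet_monotone hs hs'))
  exact sub_eq_zero.1 (pow_eq_zero_iff two_ne_zero |>.1 (le_antisymm hsq (sq_nonneg _)))

theorem abs_proj_neg_self_le (hc : 0 ≤ c) (x : ℝ) : |proj (-c) c x| ≤ c := by
  rw [abs_le, proj]
  exact ⟨le_max_left _ _, max_le (neg_le_self hc) (min_le_left _ _)⟩

theorem proj_neg_self_of_le_neg (hc : 0 ≤ c) (hx : x ≤ -c) : proj (-c) c x = -c := by
  rw [proj, min_eq_right (by linarith), max_eq_left hx]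

theorem proj_neg_self_of_abs_le (hx : |x| ≤ c) : proj (-c) c x = x := by
  rw [abs_le] at hx
  rw [proj, min_eq_right hx.2, max_eq_right hx.1]

theorem proj_neg_self_of_le (hc : 0 ≤ c) (hx : c ≤ x) : proj (-c) c x = c := by
  rw [proj, min_eq_left hx, max_eq_right (by linarith)]

theorem abs_le_or_lt_neg_or_lt (x c : ℝ) : |x| ≤ c ∨ x < -c ∨ c < x := by
  rcases le_or_gt |x| c with h | h
  · exact Or.inl h
  · rcases lt_abs.1 h with h | h
    · exact Or.inr (Or.inr h)
    · exact Or.inr (Or.inl (by linarith))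

theorem mem_sgnSet_sub_proj (hc : 0 < c) (x : ℝ) :
    proj (-c) c x / c ∈ sgnSet (x - proj (-c) c x) := by
  refine mem_sgnSet_iff.2 ⟨?_, ?_⟩
  · rw [abs_div, abs_of_pos hc, div_le_one hc]
    exact abs_proj_neg_self_le hc.le x
  rcases abs_le_or_lt_neg_or_lt x c with hx | hx | hx
  · simp [proj_neg_self_of_abs_le hx]
  · rw [proj_neg_self_of_le_neg hc.le hx.le, abs_of_neg (by linarith), neg_div_self hc.ne']
    ring
  · rw [proj_neg_self_of_le hc.le hx.le, abs_of_pos (by linarith), div_self hc.ne', one_mul]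

theorem exists_mem_sgnSet_sub_proj (hc : 0 < c) (x : ℝ) :
    ∃ s ∈ sgnSet (x - proj (-c) c x), x - proj (-c) c x = x - c * s :=
  ⟨proj (-c) c x / c, mem_sgnSet_sub_proj hc x, by rw [mul_div_cancel₀ _ hc.ne']⟩

theorem eq_sub_proj_of_mem_sgnSet (hc : 0 < c) (hs : s ∈ sgnSet w) (hw : w = x - c * s) :
    w = x - proj (-c) c x := by
  obtain ⟨s', hs', hw'⟩ := exists_mem_sgnSet_sub_proj hc x
  exact eq_of_add_mul_eq_of_mem_sgnSet hc hs hs' (by linarith)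

theorem abs_sub_proj_neg_self (hc : 0 ≤ c) (x : ℝ) :
    |x - proj (-c) c x| = max (|x| - c) 0 := by
  rcases abs_le_or_lt_neg_or_lt x c with hx | hx | hx
  · rw [proj_neg_self_of_abs_le hx, sub_self, abs_zero, max_eq_right (by linarith)]
  · rw [proj_neg_self_of_le_neg hc hx.le, abs_of_neg (by linarith), abs_of_neg (by linarith),
      max_eq_left (by linarith)]
    ring
  · rw [proj_neg_self_of_le hc hx.le, abs_of_pos (by linarith), abs_of_pos (by linarith),
      max_eq_left (by linarith)]

end ImplicitStep

theorem abs_iterate_sub_proj {c : ℝ} (hc : 0 ≤ c) {z : ℕ → ℝ}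
    (hz : ∀ k, z (k + 1) = z k - proj (-c) c (z k)) (k : ℕ) :
    |z k| = max (|z 0| - k * c) 0 := by
  induction k with
  | zero => simp
  | succ k ih =>
    rw [hz, abs_sub_proj_neg_self hc, ih]
    push_cast
    rcases le_total (|z 0| - k * c) 0 with h | h
    · rw [max_eq_right h, max_eq_right (by linarith), max_eq_right (by linarith)]
    · rw [max_eq_left h]
      ring_nf

theorem stmt_10 (F h : ℝ) (hF : 0 < F) (hh : 0 < h)
    (z : ℕ → ℝ) (hz : ∀ k, z (k+1) = z k - proj (-(h*F)) (h*F) (z k)) :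
    (∀ k, (∃ s ∈ sgnSet (z (k+1)), z (k+1) = z k - h * F * s) ∧
      (∀ w, (∃ s ∈ sgnSet w, w = z k - h * F * s) → w = z (k+1))) ∧
    (∀ k, (|z k| ≤ h * F → z (k+1) = 0) ∧
      (h * F < |z k| → |z (k+1)| = |z k| - h * F ∧ |z (k+1)| < |z k|)) ∧
    (∀ k, ⌈|z 0| / (h * F)⌉₊ ≤ k → z k = 0) := by
  set c := h * F
  have hc : 0 < c := mul_pos hh hF
  have hstep (k : ℕ) : |z (k + 1)| = max (|z k| - c) 0 := by
    rw [hz, abs_sub_proj_neg_self hc.le]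
  refine ⟨fun k => ⟨?_, ?_⟩, fun k => ⟨fun hk => ?_, fun hk => ?_⟩, fun k hk => ?_⟩
  · rw [hz]
    exact exists_mem_sgnSet_sub_proj hc (z k)
  · rintro w ⟨s, hs, hw⟩
    rw [hz]
    exact eq_sub_proj_of_mem_sgnSet hc hs hw
  · rw [← abs_eq_zero, hstep, max_eq_right (by linarith)]
  · rw [hstep, max_eq_left (by linarith)]
    exact ⟨rfl, by linarith⟩
  · have hkc : |z 0| ≤ k * c := (div_le_iff₀ hc).1 ((Nat.le_ceil _).trans (by exact_mod_cast hk))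
    rw [← abs_eq_zero, abs_iterate_sub_proj hc.le hz, max_eq_right (by linarith)]
end
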